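/- Let n be a positive integer and let p, q > 0 with p + q < 1. Let (M, K, n−M−K) be a multinomial random vector of n trials with cell probabilities (p, q, 1−p−q), i.e. P(M=m, K=k) = n!/(m! k! (n−m−k)!) · p^m q^k (1−p−q)^{n−m−k} for m, k ≥ 0 with m+k ≤ n. Then E[(J(n) − J(M)) (J(n) − J(K))] = ∑_{m=1}^{n} ∑_{k=1}^{m} [ (1−q)^m (1 − p/(1−q))^k + (1−p)^m (1 − q/(1−p))^k ] / (mk) + ∑_{m=1}^{n} [ 1 − (1−p)^m − (1−q)^m ] / m². -/

import Mathlib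

/-!
Write `E_n f = ∑_m C(n,m) p^m ∑_k C(n-m,k) q^k r^(n-m-k) f(m,k)` for the expectation of
`f(M,K)`, where `r = 1 - p - q`. Splitting off the last trial gives the first-step recursion
`E_{n+1} f = p E_n f(·+1,·) + q E_n f(·,·+1) + r E_n f`, and the absorption identity
`C(n,m)/(m+1) = C(n+1,m+1)/(n+1)` turns `(n+1) p E_n[g(M+1,K)/(M+1)]` into
`E_{n+1} g - E_{n+1}[g; M = 0]`. Together with `J(n+1) = J n + 1/(n+1)` these give a first-order
recursion in `n` for `E_n[(J n - J M)(J n - J K)]`, whose one-variable ingredient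
`E_n[J n - J M] = ∑_{t ≤ n} (1-p)^t / t` comes out of the same two identities for binomial sums;
summing the recursion gives the closed form.
-/

/-- `J m` is the `m`-th harmonic number `∑_{k=1}^m 1/k`, with `J 0 = 0`. -/
noncomputable def J (m : ℕ) : ℝ := ∑ k ∈ Finset.range m, (1 : ℝ) / (k + 1)

open Finset

theorem sum_range_succ_choose_mul {R : Type*} [Semiring R] (n : ℕ) (a : ℕ → R) :
    ∑ m ∈ range (n + 2), ((n + 1).choose m : R) * a m
      = ∑ m ∈ range (n + 1), (n.choose m : R) * (a m + a (m + 1)) := by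
  have hlow : ∑ m ∈ range (n + 1), (n.choose (m + 1) : R) * a (m + 1) + a 0
      = ∑ m ∈ range (n + 1), (n.choose m : R) * a m := by
    have h := sum_range_succ' (fun m => (n.choose m : R) * a m) (n + 1)
    rw [sum_range_succ, Nat.choose_succ_self] at h
    simpa using h.symm
  simp_rw [sum_range_succ' _ (n + 1), mul_add, sum_add_distrib, ← hlow]
  simp only [Nat.choose_succ_succ, Nat.cast_add, add_mul, sum_add_distrib,
    Nat.choose_zero_right, Nat.cast_one, one_mul]
  abel

theorem sum_range_choose_mul_div_succ {K : Type*} [Field K] [CharZero K] (n : ℕ) (a : ℕ → K) :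
    (n + 1) * ∑ m ∈ range (n + 1), (n.choose m : K) * a (m + 1) / (m + 1)
      = ∑ m ∈ range (n + 2), ((n + 1).choose m : K) * a m - a 0 := by
  rw [sum_range_succ' _ (n + 1), mul_sum]
  simp only [Nat.choose_zero_right, Nat.cast_one, one_mul, add_sub_cancel_right]
  refine sum_congr rfl fun m _ => ?_
  have h : ((n : K) + 1) * n.choose m = (n + 1).choose (m + 1) * (m + 1) := by
    exact_mod_cast Nat.add_one_mul_choose_eq n m
  rw [mul_div_assoc', div_eq_iff m.cast_add_one_ne_zero]
  linear_combination a (m + 1) * h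

theorem J_succ (n : ℕ) : J (n + 1) = J n + 1 / (n + 1) := by
  simp [J, sum_range_succ]

noncomputable def binomialSum (x y : ℝ) (n : ℕ) (g : ℕ → ℝ) : ℝ :=
  ∑ m ∈ range (n + 1), (n.choose m : ℝ) * x ^ m * y ^ (n - m) * g m

noncomputable def harmonicTail (x y : ℝ) (n : ℕ) : ℝ :=
  ∑ t ∈ Icc 1 n, y ^ t * (x + y) ^ (n - t) / t

theorem harmonicTail_succ (x y : ℝ) (n : ℕ) :
    harmonicTail x y (n + 1) = (x + y) * harmonicTail x y n + y ^ (n + 1) / (n + 1) := by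
  rw [harmonicTail, sum_Icc_succ_top (by omega), harmonicTail, mul_sum]
  push_cast
  rw [Nat.sub_self, pow_zero, mul_one]
  congr 1
  refine sum_congr rfl fun t ht => ?_
  rw [show n + 1 - t = n - t + 1 by grind]
  ring

namespace binomialSum

variable (x y : ℝ)

theorem zero (g : ℕ → ℝ) : binomialSum x y 0 g = g 0 := by
  simp [binomialSum]

theorem add (n : ℕ) (g h : ℕ → ℝ) :
    binomialSum x y n (fun m => g m + h m) = binomialSum x y n g + binomialSum x y n h := by
  simp only [binomialSum, mul_add, sum_add_distrib]

theorem sub (n : ℕ) (g h : ℕ → ℝ) :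
    binomialSum x y n (fun m => g m - h m) = binomialSum x y n g - binomialSum x y n h := by
  simp only [binomialSum, mul_sub, sum_sub_distrib]

theorem div_const (n : ℕ) (g : ℕ → ℝ) (c : ℝ) :
    binomialSum x y n (fun m => g m / c) = binomialSum x y n g / c := by
  simp only [binomialSum, mul_div_assoc', sum_div]

theorem const (n : ℕ) (c : ℝ) : binomialSum x y n (fun _ => c) = (x + y) ^ n * c := by
  rw [binomialSum, add_pow, sum_mul]
  exact sum_congr rfl fun m _ => by ring

theorem succ (n : ℕ) (g : ℕ → ℝ) :
    binomialSum x y (n + 1) g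
      = x * binomialSum x y n (fun m => g (m + 1)) + y * binomialSum x y n g := by
  simp only [binomialSum, mul_assoc, sum_range_succ_choose_mul, mul_sum, ← sum_add_distrib]
  refine sum_congr rfl fun m hm => ?_
  rw [show n + 1 - m = n - m + 1 by grind, Nat.add_sub_add_right]
  ring

theorem absorb (n : ℕ) (g : ℕ → ℝ) :
    (n + 1) * x * binomialSum x y n (fun m => g (m + 1) / (m + 1))
      = binomialSum x y (n + 1) g - y ^ (n + 1) * g 0 := by
  have h := sum_range_choose_mul_div_succ n (fun m => x ^ m * y ^ (n + 1 - m) * g m)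
  simp only [Nat.add_sub_add_right, pow_zero, one_mul, Nat.sub_zero] at h
  rw [binomialSum, binomialSum, mul_assoc, mul_sum]
  simp only [← mul_assoc] at h ⊢
  rw [← h]
  congr 1
  refine sum_congr rfl fun m _ => ?_
  ring

theorem harmonic_sub (n : ℕ) : binomialSum x y n (fun m => J n - J m) = harmonicTail x y n := by
  induction n with
  | zero => simp [zero, harmonicTail]
  | succ n ih =>
    have hstep : ∀ m, J (n + 1) - J (m + 1) = J (n + 1) - J m - 1 / (m + 1) := fun m => by
      rw [J_succ m]; ring
    have hshift : ∀ m, J (n + 1) - J m = J n - J m + 1 / (n + 1) := fun m => by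
      rw [J_succ n]; ring
    have hinv : x * binomialSum x y n (fun m => 1 / (m + 1))
        = ((x + y) ^ (n + 1) - y ^ (n + 1)) / (n + 1) := by
      rw [eq_div_iff n.cast_add_one_ne_zero]
      linear_combination absorb x y n (fun _ => 1) + const x y (n + 1) 1
    rw [succ, funext hstep, sub, funext hshift, add, ih, const, harmonicTail_succ]
    linear_combination -hinv

end binomialSum

noncomputable def trinomialSum (p q r : ℝ) (n : ℕ) (f : ℕ → ℕ → ℝ) : ℝ :=
  ∑ m ∈ range (n + 1), (n.choose m : ℝ) * p ^ m * binomialSum q r (n - m) (f m)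

namespace trinomialSum

variable (p q r : ℝ)

theorem zero (f : ℕ → ℕ → ℝ) : trinomialSum p q r 0 f = f 0 0 := by
  simp [trinomialSum, binomialSum.zero]

theorem add (n : ℕ) (f g : ℕ → ℕ → ℝ) :
    trinomialSum p q r n (fun m k => f m k + g m k)
      = trinomialSum p q r n f + trinomialSum p q r n g := by
  simp only [trinomialSum, binomialSum.add, mul_add, sum_add_distrib]

theorem sub (n : ℕ) (f g : ℕ → ℕ → ℝ) :
    trinomialSum p q r n (fun m k => f m k - g m k)
      = trinomialSum p q r n f - trinomialSum p q r n g := by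
  simp only [trinomialSum, binomialSum.sub, mul_sub, sum_sub_distrib]

theorem div_const (n : ℕ) (f : ℕ → ℕ → ℝ) (c : ℝ) :
    trinomialSum p q r n (fun m k => f m k / c) = trinomialSum p q r n f / c := by
  simp only [trinomialSum, binomialSum.div_const, mul_div_assoc', sum_div]

theorem fst (n : ℕ) (g : ℕ → ℝ) :
    trinomialSum p q r n (fun m _ => g m) = binomialSum p (q + r) n g := by
  rw [trinomialSum, binomialSum]
  exact sum_congr rfl fun m _ => by rw [binomialSum.const]; ring

theorem succ (n : ℕ) (f : ℕ → ℕ → ℝ) :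
    trinomialSum p q r (n + 1) f
      = p * trinomialSum p q r n (fun m k => f (m + 1) k)
        + q * trinomialSum p q r n (fun m k => f m (k + 1)) + r * trinomialSum p q r n f := by
  simp only [trinomialSum, mul_assoc, sum_range_succ_choose_mul, mul_sum, ← sum_add_distrib]
  refine sum_congr rfl fun m hm => ?_
  rw [show n + 1 - m = n - m + 1 by grind, Nat.add_sub_add_right, binomialSum.succ]
  ring

theorem comm (n : ℕ) (f : ℕ → ℕ → ℝ) :
    trinomialSum p q r n f = trinomialSum q p r n (fun k m => f m k) := by
  induction n generalizing f with
  | zero => simp [zero]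
  | succ n ih => rw [succ, succ, ih, ih, ih]; ring

theorem snd (n : ℕ) (g : ℕ → ℝ) :
    trinomialSum p q r n (fun _ k => g k) = binomialSum q (p + r) n g := by
  rw [comm, fst]

theorem absorb (n : ℕ) (f : ℕ → ℕ → ℝ) :
    (n + 1) * p * trinomialSum p q r n (fun m k => f (m + 1) k / (m + 1))
      = trinomialSum p q r (n + 1) f - binomialSum q r (n + 1) (f 0) := by
  have h := sum_range_choose_mul_div_succ n (fun m => p ^ m * binomialSum q r (n + 1 - m) (f m))
  simp only [Nat.add_sub_add_right, pow_zero, one_mul, Nat.sub_zero] at h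
  rw [trinomialSum, trinomialSum, mul_assoc, mul_sum]
  simp only [binomialSum.div_const, ← mul_assoc] at h ⊢
  rw [← h]
  congr 1
  refine sum_congr rfl fun m _ => ?_
  ring

end trinomialSum

theorem trinomialSum_harmonic_sub_mul_succ (p q r : ℝ) (hs : p + q + r = 1) (n : ℕ) :
    trinomialSum p q r (n + 1) (fun m k => (J (n + 1) - J m) * (J (n + 1) - J k))
      = trinomialSum p q r n (fun m k => (J n - J m) * (J n - J k))
        + (harmonicTail p r (n + 1) + harmonicTail q r (n + 1)) / (n + 1)
        + (1 - (q + r) ^ (n + 1) - (p + r) ^ (n + 1)) / (n + 1) ^ 2 := by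
  have hn : (n : ℝ) + 1 ≠ 0 := n.cast_add_one_ne_zero
  have hM : p * trinomialSum p q r n (fun m k => (J (n + 1) - J k) / (m + 1))
      = (harmonicTail q (p + r) (n + 1) - harmonicTail q r (n + 1)) / (n + 1) := by
    rw [eq_div_iff hn, ← binomialSum.harmonic_sub, ← binomialSum.harmonic_sub,
      ← trinomialSum.snd, ← trinomialSum.absorb p q r n (fun _ k => J (n + 1) - J k)]
    ring
  have hK : q * trinomialSum p q r n (fun m k => (J (n + 1) - J m) / (k + 1))
      = (harmonicTail p (q + r) (n + 1) - harmonicTail p r (n + 1)) / (n + 1) := by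
    rw [eq_div_iff hn, ← binomialSum.harmonic_sub, ← binomialSum.harmonic_sub,
      ← trinomialSum.snd q p r, ← trinomialSum.absorb q p r n (fun _ m => J (n + 1) - J m),
      trinomialSum.comm]
    ring
  have hF : trinomialSum p q r n (fun m k => (J (n + 1) - J m) * (J (n + 1) - J k))
      = trinomialSum p q r n (fun m k => (J n - J m) * (J n - J k))
        + (harmonicTail p (q + r) n + harmonicTail q (p + r) n + 1 / (n + 1)) / (n + 1) := by
    have hsplit : ∀ m k, (J (n + 1) - J m) * (J (n + 1) - J k)
        = (J n - J m) * (J n - J k) + ((J n - J m) + (J n - J k) + 1 / (n + 1)) / (n + 1) :=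
      fun m k => by rw [J_succ]; field_simp; ring
    simp only [hsplit, trinomialSum.add, trinomialSum.div_const, trinomialSum.fst,
      trinomialSum.snd, binomialSum.harmonic_sub, binomialSum.const, ← add_assoc, hs, one_pow,
      one_mul]
  have hshift : ∀ m k, (J (n + 1) - J (m + 1)) * (J (n + 1) - J k)
      = (J (n + 1) - J m) * (J (n + 1) - J k) - (J (n + 1) - J k) / (m + 1) := fun m k => by
    rw [J_succ m]; ring
  have hshift' : ∀ m k, (J (n + 1) - J m) * (J (n + 1) - J (k + 1))
      = (J (n + 1) - J m) * (J (n + 1) - J k) - (J (n + 1) - J m) / (k + 1) := fun m k => by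
    rw [J_succ k]; ring
  rw [trinomialSum.succ]
  simp only [hshift, hshift', trinomialSum.sub]
  have h1 := harmonicTail_succ p (q + r) n
  have h2 := harmonicTail_succ q (p + r) n
  rw [show p + (q + r) = 1 by linarith] at h1
  rw [show q + (p + r) = 1 by linarith] at h2
  obtain rfl : r = 1 - p - q := by linarith
  rw [sq, ← div_div]
  linear_combination hF - hM - hK - h1 / (n + 1) - h2 / (n + 1)

theorem trinomialSum_harmonic_sub_mul (p q r : ℝ) (hs : p + q + r = 1) (n : ℕ) :
    trinomialSum p q r n (fun m k => (J n - J m) * (J n - J k))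
      = ∑ m ∈ Icc 1 n, (harmonicTail p r m + harmonicTail q r m) / m
        + ∑ m ∈ Icc 1 n, (1 - (q + r) ^ m - (p + r) ^ m) / (m : ℝ) ^ 2 := by
  induction n with
  | zero => simp [trinomialSum.zero, J]
  | succ n ih =>
    rw [trinomialSum_harmonic_sub_mul_succ p q r hs, ih, sum_Icc_succ_top (by omega),
      sum_Icc_succ_top (by omega)]
    push_cast
    ring

theorem cast_choose_mul_choose {K : Type*} [Field K] [CharZero K] {n m k : ℕ} (h : m + k ≤ n) :
    (n.choose m * (n - m).choose k : K)
      = n.factorial / (m.factorial * k.factorial * (n - m - k).factorial) := by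
  have : ((n - m).factorial : K) ≠ 0 := Nat.cast_ne_zero.2 (Nat.factorial_ne_zero _)
  rw [Nat.cast_choose K (by omega : m ≤ n), Nat.cast_choose K (by omega : k ≤ n - m)]
  field_simp

theorem trinomialSum_eq_sum_factorial (p q r : ℝ) (n : ℕ) (f : ℕ → ℕ → ℝ) :
    trinomialSum p q r n f
      = ∑ m ∈ range (n + 1), ∑ k ∈ range (n + 1 - m),
          f m k * ((n.factorial : ℝ) /
            ((m.factorial : ℝ) * (k.factorial : ℝ) * ((n - m - k).factorial : ℝ))) *
          p ^ m * q ^ k * r ^ (n - m - k) := by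
  refine sum_congr rfl fun m hm => ?_
  rw [binomialSum, show n - m + 1 = n + 1 - m by grind, mul_sum]
  refine sum_congr rfl fun k hk => ?_
  rw [← cast_choose_mul_choose (by grind)]
  ring

theorem pow_mul_one_sub_div_pow {K : Type*} [Field K] {a : K} (b : K) (ha : a ≠ 0) {k m : ℕ}
    (hkm : k ≤ m) : a ^ m * (1 - b / a) ^ k = (a - b) ^ k * a ^ (m - k) := by
  rw [one_sub_div ha, div_pow, ← pow_mul_pow_sub a hkm]
  field_simp

theorem harmonic_multinomial_product_general (n : ℕ) (p q : ℝ)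
    (hp : 0 < p) (hq : 0 < q) (hpq : p + q < 1) :
    ∑ m ∈ Finset.range (n + 1), ∑ k ∈ Finset.range (n + 1 - m),
        (J n - J m) * (J n - J k) *
          ((n.factorial : ℝ) /
            ((m.factorial : ℝ) * (k.factorial : ℝ) * ((n - m - k).factorial : ℝ))) *
          p ^ m * q ^ k * (1 - p - q) ^ (n - m - k)
      = ∑ m ∈ Finset.Icc 1 n, ∑ k ∈ Finset.Icc 1 m,
          ((1 - q) ^ m * (1 - p / (1 - q)) ^ k
            + (1 - p) ^ m * (1 - q / (1 - p)) ^ k) / (m * k)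
        + ∑ m ∈ Finset.Icc 1 n, (1 - (1 - p) ^ m - (1 - q) ^ m) / (m : ℝ) ^ 2 := by
  have hp1 : 1 - p ≠ 0 := by linarith
  have hq1 : 1 - q ≠ 0 := by linarith
  have hpr : p + (1 - p - q) = 1 - q := by ring
  have hqr : q + (1 - p - q) = 1 - p := by ring
  rw [← trinomialSum_eq_sum_factorial, trinomialSum_harmonic_sub_mul p q _ (by ring), hpr, hqr]
  congr 1
  refine sum_congr rfl fun m _ => ?_
  rw [harmonicTail, harmonicTail, hpr, hqr, ← sum_add_distrib, sum_div]
  refine sum_congr rfl fun k hk => ?_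
  have hkm := (mem_Icc.1 hk).2
  rw [pow_mul_one_sub_div_pow p hq1 hkm, pow_mul_one_sub_div_pow q hp1 hkm,
    show 1 - q - p = 1 - p - q by ring]
  field_simp

/-- Joint expectation of harmonic-transformed multinomial counts:
for `(M, K, n−M−K)` multinomial with `n` trials and cell probabilities `(p, q, 1−p−q)`,
`E[(J(n)−J(M))(J(n)−J(K))]` equals
`∑_{m=1}^n ∑_{k=1}^m [(1−q)^m (1−p/(1−q))^k + (1−p)^m (1−q/(1−p))^k]/(mk)
  + ∑_{m=1}^n [1 − (1−p)^m − (1−q)^m]/m²`. -/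
theorem harmonic_multinomial_product (n : ℕ) (hn : 1 ≤ n) (p q : ℝ)
    (hp : 0 < p) (hq : 0 < q) (hpq : p + q < 1) :
    ∑ m ∈ Finset.range (n + 1), ∑ k ∈ Finset.range (n + 1 - m),
        (J n - J m) * (J n - J k) *
          ((n.factorial : ℝ) /
            ((m.factorial : ℝ) * (k.factorial : ℝ) * ((n - m - k).factorial : ℝ))) *
          p ^ m * q ^ k * (1 - p - q) ^ (n - m - k)
      = ∑ m ∈ Finset.Icc 1 n, ∑ k ∈ Finset.Icc 1 m,
          ((1 - q) ^ m * (1 - p / (1 - q)) ^ k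
            + (1 - p) ^ m * (1 - q / (1 - p)) ^ k) / (m * k)
        + ∑ m ∈ Finset.Icc 1 n, (1 - (1 - p) ^ m - (1 - q) ^ m) / (m : ℝ) ^ 2 :=
  harmonic_multinomial_product_general n p q hp hq hpq
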